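/- Let M be a natural number with M ≥ 1 and let f = ⌊√M⌋ (the floor of the square root of M). Then the number of weak compositions of f into M parts satisfies (f + M − 1)! / (f! · (M − 1)!) ≥ f^f. Equivalently, the binomial coefficient C(f + M − 1, f) is at least f^f. -/
import Mathlib

open Nat

open Finset in
lemma prod_range_sub_eq_factorial (k : ℕ) : ∏ i ∈ Finset.range k, (k - i) = k ! := by
  have := Finset.prod_range_reflect (fun i => i + 1) k
  rw [← Finset.prod_range_add_one_eq_factorial, ← this]
  apply Finset.prod_congr rfl
  intro i hi
  simp only [Finset.mem_range] at hi
  omega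

lemma pow_mul_factorial_le (n k : ℕ) (h : k ≤ n) :
    n ^ k * k ! ≤ k ^ k * n.descFactorial k := by
  rw [← prod_range_sub_eq_factorial, Nat.descFactorial_eq_prod_range,
    show n ^ k = ∏ _i ∈ Finset.range k, n by simp,
    show k ^ k = ∏ _i ∈ Finset.range k, k by simp,
    ← Finset.prod_mul_distrib, ← Finset.prod_mul_distrib]
  apply Finset.prod_le_prod'
  intro i hi
  simp only [Finset.mem_range] at hi
  nlinarith [Nat.sub_add_cancel (le_of_lt (lt_of_lt_of_le hi h)), Nat.sub_add_cancel hi.le,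
    (show k - i ≤ n - i by omega)]

/-- For `M ≥ 1` and `f = ⌊√M⌋`, the number of weak compositions of `f` into `M` parts,
`C(f + M - 1, f) = (f + M - 1)! / (f! * (M - 1)!)`, is at least `f ^ f`. -/
theorem weak_compositions_ge_sqrt_pow_sqrt (M : ℕ) (hM : 1 ≤ M) :
    (Nat.sqrt M) ^ (Nat.sqrt M) ≤ (Nat.sqrt M + M - 1).choose (Nat.sqrt M) := by
  set f := Nat.sqrt M with hf
  have hf1 : 1 ≤ f := Nat.sqrt_pos.mpr hM
  have hsq : f * f ≤ M := by have := Nat.sqrt_le' M; simpa [pow_two] using this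
  set n := f + M - 1 with hn
  have hkn : f ≤ n := by omega
  have key : n ^ f * f ! ≤ f ^ f * n.descFactorial f := pow_mul_factorial_le n f hkn
  have hdesc : n.descFactorial f = n.choose f * f ! := by
    rw [Nat.descFactorial_eq_factorial_mul_choose]; ring
  rw [hdesc] at key
  have h2 : f ^ f * f ^ f * f ! ≤ f ^ f * n.choose f * f ! := by
    calc f ^ f * f ^ f * f ! = (f * f) ^ f * f ! := by rw [mul_pow]
    _ ≤ M ^ f * f ! := by
        gcongr
    _ ≤ n ^ f * f ! := by gcongr; omega
    _ ≤ f ^ f * (n.choose f * f !) := key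
    _ = f ^ f * n.choose f * f ! := by ring
  have := Nat.le_of_mul_le_mul_right h2 (Nat.factorial_pos f)
  exact Nat.le_of_mul_le_mul_left this (by positivity)
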